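/- For any finite graphs G and J, Υ(G ∨ J) ≤ Υ(G) + Υ(J), where G ∨ J is the join of G and J. -/

import Mathlib

open SimpleGraph

/-- The join of two graphs on disjoint vertex sets. -/
def SimpleGraph.join {V W : Type*} (G : SimpleGraph V) (J : SimpleGraph W) :
    SimpleGraph (V ⊕ W) where
  Adj x y :=
    match x, y with
    | Sum.inl a, Sum.inl b => G.Adj a b
    | Sum.inr a, Sum.inr b => J.Adj a b
    | Sum.inl _, Sum.inr _ => True
    | Sum.inr _, Sum.inl _ => True
  symm := by
    constructor
    rintro (a | a) (b | b) h
    · exact G.adj_symm h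
    · trivial
    · trivial
    · exact J.adj_symm h
  loopless := by
    constructor
    rintro (a | a) h
    · exact G.irrefl h
    · exact J.irrefl h

/-- The common neighbourhood of a set of vertices. -/
def SimpleGraph.commonNbhd {V : Type*} (G : SimpleGraph V) (S : Set V) : Set V :=
  {x | ∀ v ∈ S, G.Adj v x}

/-- A small common neighbourhood set. -/
def SimpleGraph.IsSCN {V : Type*} (G : SimpleGraph V) (S : Set V) : Prop :=
  S.Nonempty ∧ (G.commonNbhd S).ncard ≤ S.ncard

/-- `Υ(G)`: the minimum cardinality of a small common neighbourhood set. -/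
noncomputable def SimpleGraph.upsilon {V : Type*} (G : SimpleGraph V) : ℕ :=
  sInf {n | ∃ S : Set V, G.IsSCN S ∧ S.ncard = n}

/-!
If `A` is a small common neighbourhood set of `G` and `B` one of `J`, then `A ⊔ B` (placed in
`V ⊕ W`) is one of `G ∨ J`: every vertex of `V` is adjacent to all of `W` and vice versa, so the
common neighbourhood of `A ⊔ B` in the join is exactly the disjoint union of the common
neighbourhoods of `A` in `G` and of `B` in `J`. Taking `A`, `B` of minimum size gives the bound.
-/

namespace SimpleGraph

variable {V W : Type*} (G : SimpleGraph V) (J : SimpleGraph W)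

theorem commonNbhd_univ : G.commonNbhd Set.univ = ∅ :=
  Set.eq_empty_of_forall_notMem fun x hx => G.irrefl (hx x (Set.mem_univ x))

theorem isSCN_univ [Nonempty V] : G.IsSCN Set.univ :=
  ⟨Set.univ_nonempty, by simp [commonNbhd_univ]⟩

theorem upsilon_le_ncard {S : Set V} (hS : G.IsSCN S) : G.upsilon ≤ S.ncard :=
  Nat.sInf_le ⟨S, hS, rfl⟩

theorem exists_isSCN_ncard_eq_upsilon [Nonempty V] : ∃ S, G.IsSCN S ∧ S.ncard = G.upsilon :=
  Nat.sInf_mem (s := {n | ∃ S : Set V, G.IsSCN S ∧ S.ncard = n})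
    ⟨_, Set.univ, G.isSCN_univ, rfl⟩

theorem commonNbhd_join (A : Set V) (B : Set W) :
    (G.join J).commonNbhd (Sum.inl '' A ∪ Sum.inr '' B) =
      Sum.inl '' G.commonNbhd A ∪ Sum.inr '' J.commonNbhd B := by
  ext (x | x) <;> simp [commonNbhd, join]

end SimpleGraph

theorem Set.ncard_image_inl_union_image_inr {V W : Type*} [Finite V] [Finite W]
    (A : Set V) (B : Set W) :
    (Sum.inl '' A ∪ Sum.inr '' B : Set (V ⊕ W)).ncard = A.ncard + B.ncard := by
  rw [Set.ncard_union_eq Set.disjoint_image_inl_image_inr,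
    Set.ncard_image_of_injective _ Sum.inl_injective,
    Set.ncard_image_of_injective _ Sum.inr_injective]

namespace SimpleGraph

variable {V W : Type*} [Finite V] [Finite W] {G : SimpleGraph V} {J : SimpleGraph W}

theorem IsSCN.join {A : Set V} {B : Set W} (hA : G.IsSCN A) (hB : J.IsSCN B) :
    (G.join J).IsSCN (Sum.inl '' A ∪ Sum.inr '' B) := by
  refine ⟨(hA.1.image _).inl, ?_⟩
  rw [commonNbhd_join, Set.ncard_image_inl_union_image_inr, Set.ncard_image_inl_union_image_inr]
  exact add_le_add hA.2 hB.2

end SimpleGraph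

theorem stmt1 {V W : Type*} [Fintype V] [Fintype W] [Nonempty V] [Nonempty W]
    (G : SimpleGraph V) (J : SimpleGraph W) :
    (G.join J).upsilon ≤ G.upsilon + J.upsilon := by
  obtain ⟨A, hA, hAcard⟩ := G.exists_isSCN_ncard_eq_upsilon
  obtain ⟨B, hB, hBcard⟩ := J.exists_isSCN_ncard_eq_upsilon
  calc (G.join J).upsilon ≤ (Sum.inl '' A ∪ Sum.inr '' B : Set (V ⊕ W)).ncard :=
        upsilon_le_ncard _ (hA.join hB)
    _ = G.upsilon + J.upsilon := by rw [Set.ncard_image_inl_union_image_inr, hAcard, hBcard]
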